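/- Let P be a probability measure on a measurable space 𝒳, M > 0, c > 0, q ≥ 1, H > 0, ε ≥ 0, t ∈ (0,1), γ ∈ (0,1), and let V ≥ 1 be an integer with V < 1/(2γ). Set I_j = [(j−1)/V, j/V] and A_j = (2j−1)/(2V). Let μ : 𝒳 × [0,1] → ℝ be measurable with |μ(x,A)| ≤ M and |μ(x,A) − μ(x,Ã)| ≤ M|A − Ã| for all x, A, Ã, and let A* : 𝒳 → [0,1] be measurable with μ(x, A*(x)) = max_{A∈[0,1]} μ(x,A) for all x. Let e : 𝒳 × [0,1] → ℝ be measurable with e(x,A) ≥ η > 0 and A ↦ e(x,A) integrable, and define μ_{I_j}(x) = (∫_{I_j} μ(x,A) e(x,A) dA)/(∫_{I_j} e(x,A) dA). Assume the continuous noise condition P({x : ∃ A ∈ [0,1] with |A − A*(x)| ≥ γ and μ(x,A*(x)) − μ(x,A) ≤ M t}) ≤ c t^q (1 − γ). Let μ̃_{I_1},…,μ̃_{I_V} : 𝒳 → ℝ be measurable with sup_x |μ̃_{I_j}(x) − μ_{I_j}(x)| ≤ ε for all j, and define π̃(x) = Softmax_H(μ̃_{I_1}(x),…,μ̃_{I_V}(x)).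 Then ∫_𝒳 [ μ(x, A*(x)) − Σ_{j=1}^V μ_{I_j}(x) π̃_j(x) ] dP(x) ≤ M/V + 2 c M t^q (1 − γ) + M V² exp(−(M t − 3M/V − 2ε)/H). (The bias bound (I₃) in the proof of Theorem 3.) -/

import Mathlib

/-!
Split `𝒳` along the set `B` of the noise condition: on `B` the discretized regret is at most
`2M`, and `B` has probability at most `c t^q (1 - γ)`. Off `B`, the cell containing `A*(x)`, and
every cell whose midpoint is `γ`-close to `A*(x)` (hence `1/V`-close, since `γ < 1/(2V)`), loses
at most `M/V` by the Lipschitz bound. Every other cell has its midpoint `γ`-far from `A*(x)`, so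
its average lies at least `Mt - M/(2V)` below the optimum; the `ε`-accurate estimates then trail
that of the cell of `A*(x)` by `Mt - 3M/(2V) - 2ε`, and the softmax gives each such cell mass at
most `exp (-(Mt - 3M/V - 2ε)/H)`.
-/

open MeasureTheory Set

section WeightedAverage

variable {α : Type*} [MeasurableSpace α] {ν : Measure α} {s : Set α} {w g : α → ℝ} {b : ℝ}

noncomputable def weightedAverage (ν : Measure α) (s : Set α) (w g : α → ℝ) : ℝ :=
  (∫ a in s, g a * w a ∂ν) / ∫ a in s, w a ∂ν

lemma weightedAverage_le (hs : MeasurableSet s) (hw : ∀ a ∈ s, 0 ≤ w a)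
    (hwi : IntegrableOn w s ν) (hgw : IntegrableOn (fun a => g a * w a) s ν)
    (hpos : 0 < ∫ a in s, w a ∂ν) (hg : ∀ a ∈ s, g a ≤ b) :
    weightedAverage ν s w g ≤ b := by
  rw [weightedAverage, div_le_iff₀ hpos, ← integral_const_mul]
  exact setIntegral_mono_on hgw (hwi.const_mul b) hs
    fun a ha => mul_le_mul_of_nonneg_right (hg a ha) (hw a ha)

lemma le_weightedAverage (hs : MeasurableSet s) (hw : ∀ a ∈ s, 0 ≤ w a)
    (hwi : IntegrableOn w s ν) (hgw : IntegrableOn (fun a => g a * w a) s ν)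
    (hpos : 0 < ∫ a in s, w a ∂ν) (hg : ∀ a ∈ s, b ≤ g a) :
    b ≤ weightedAverage ν s w g := by
  rw [weightedAverage, le_div_iff₀ hpos, ← integral_const_mul]
  exact setIntegral_mono_on (hwi.const_mul b) hgw hs
    fun a ha => mul_le_mul_of_nonneg_right (hg a ha) (hw a ha)

end WeightedAverage

section UniformCell

variable {V : ℕ}

noncomputable def uniformCell (V : ℕ) (j : Fin V) : Set ℝ := Icc ((j : ℕ) / V) (((j : ℕ) + 1) / V)

noncomputable def uniformCellMidpoint (V : ℕ) (j : Fin V) : ℝ := ((j : ℕ) + 1 / 2) / V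

lemma uniformCell_subset_unitInterval (j : Fin V) : uniformCell V j ⊆ Icc 0 1 := by
  have hV : (0 : ℝ) < V := by exact_mod_cast j.pos
  refine Icc_subset_Icc (by positivity) ?_
  rw [div_le_one hV]
  exact_mod_cast j.isLt

lemma exists_mem_uniformCell [NeZero V] {a : ℝ} (ha : a ∈ Icc (0 : ℝ) 1) :
    ∃ j : Fin V, a ∈ uniformCell V j := by
  have hV : (0 : ℝ) < V := by exact_mod_cast Nat.pos_of_neZero V
  have haV : 0 ≤ a * V := mul_nonneg ha.1 hV.le
  -- the cell of index `⌊a V⌋`, except for `a = 1`, which lies in the last cell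
  refine ⟨⟨min ⌊a * V⌋₊ (V - 1), by have := Nat.pos_of_neZero V; omega⟩, ?_, ?_⟩
  · rw [div_le_iff₀ hV]
    exact (Nat.cast_le.2 (min_le_left _ _)).trans (Nat.floor_le haV)
  · rw [le_div_iff₀ hV, Nat.cast_min, Nat.cast_pred (Nat.pos_of_neZero V), ← min_add_add_right,
      le_min_iff, sub_add_cancel]
    exact ⟨(Nat.lt_floor_add_one _).le, by nlinarith [ha.2]⟩

lemma abs_sub_le_of_mem_uniformCell {j : Fin V} {A A' : ℝ} (hA : A ∈ uniformCell V j)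
    (hA' : A' ∈ uniformCell V j) : |A - A'| ≤ 1 / V := by
  have h := Real.dist_le_of_mem_Icc hA hA'
  rwa [Real.dist_eq, ← sub_div, add_sub_cancel_left] at h

lemma abs_sub_uniformCellMidpoint_le {j : Fin V} {A : ℝ} (hA : A ∈ uniformCell V j) :
    |A - uniformCellMidpoint V j| ≤ 1 / (2 * V) := by
  obtain ⟨h₁, h₂⟩ := hA
  have hV : (0 : ℝ) < V := by exact_mod_cast j.pos
  rw [div_le_iff₀ hV] at h₁
  rw [le_div_iff₀ hV] at h₂
  rw [uniformCellMidpoint, show A - ((j : ℕ) + 1 / 2) / V = (A * V - ((j : ℕ) + 1 / 2)) / V by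
      field_simp, abs_div, abs_of_pos hV, ← div_div, div_le_div_iff_of_pos_right hV, abs_le]
  constructor <;> linarith

lemma uniformCellMidpoint_mem (j : Fin V) : uniformCellMidpoint V j ∈ uniformCell V j := by
  have hV : (0 : ℝ) < V := by exact_mod_cast j.pos
  constructor <;> rw [uniformCellMidpoint] <;> gcongr <;> linarith

end UniformCell

section CellAverage

variable {V : ℕ} {η M a b : ℝ} {f w : ℝ → ℝ}

noncomputable def cellAverage (V : ℕ) (w f : ℝ → ℝ) (j : Fin V) : ℝ :=
  weightedAverage volume (uniformCell V j) w f

lemma integral_uniformCell_pos (hη : 0 < η) (hw : ∀ A ∈ Icc (0 : ℝ) 1, η ≤ w A)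
    (hwi : IntegrableOn w (Icc 0 1)) (j : Fin V) : 0 < ∫ A in uniformCell V j, w A := by
  have hV : (0 : ℝ) < V := by exact_mod_cast j.pos
  have hsub := uniformCell_subset_unitInterval j
  calc 0 < 1 / V * η := by positivity
    _ = ∫ _ in uniformCell V j, η := by
      rw [setIntegral_const, uniformCell, Real.volume_real_Icc_of_le (by gcongr; linarith),
        smul_eq_mul, ← sub_div, add_sub_cancel_left]
    _ ≤ ∫ A in uniformCell V j, w A :=
      setIntegral_mono_on (integrableOn_const (by simp [uniformCell])) (hwi.mono_set hsub)
        measurableSet_Icc fun A hA => hw A (hsub hA)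

lemma cellAverage_le (hη : 0 < η) (hw : ∀ A ∈ Icc (0 : ℝ) 1, η ≤ w A)
    (hwi : IntegrableOn w (Icc 0 1)) (hf : ContinuousOn f (Icc 0 1)) (j : Fin V)
    (hb : ∀ A ∈ uniformCell V j, f A ≤ b) : cellAverage V w f j ≤ b :=
  have hsub := uniformCell_subset_unitInterval j
  weightedAverage_le measurableSet_Icc (fun A hA => hη.le.trans (hw A (hsub hA)))
    (hwi.mono_set hsub)
    (.continuousOn_mul_of_subset hf (hwi.mono_set hsub) isCompact_Icc measurableSet_Icc hsub)
    (integral_uniformCell_pos hη hw hwi j) hb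

lemma le_cellAverage (hη : 0 < η) (hw : ∀ A ∈ Icc (0 : ℝ) 1, η ≤ w A)
    (hwi : IntegrableOn w (Icc 0 1)) (hf : ContinuousOn f (Icc 0 1)) (j : Fin V)
    (hb : ∀ A ∈ uniformCell V j, b ≤ f A) : b ≤ cellAverage V w f j :=
  have hsub := uniformCell_subset_unitInterval j
  le_weightedAverage measurableSet_Icc (fun A hA => hη.le.trans (hw A (hsub hA)))
    (hwi.mono_set hsub)
    (.continuousOn_mul_of_subset hf (hwi.mono_set hsub) isCompact_Icc measurableSet_Icc hsub)
    (integral_uniformCell_pos hη hw hwi j) hb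

section Lipschitz

variable (hη : 0 < η) (hw : ∀ A ∈ Icc (0 : ℝ) 1, η ≤ w A) (hwi : IntegrableOn w (Icc 0 1))
  (hM : 0 ≤ M) (hf : ∀ A ∈ Icc (0 : ℝ) 1, ∀ A' ∈ Icc (0 : ℝ) 1, |f A - f A'| ≤ M * |A - A'|)

include hf in
lemma continuousOn_of_abs_sub_le : ContinuousOn f (Icc 0 1) :=
  (LipschitzOnWith.of_dist_le' (by simpa only [Real.dist_eq] using hf)).continuousOn

include hη hw hwi hM hf in
lemma sub_mul_le_cellAverage {r : ℝ} (ha : a ∈ Icc (0 : ℝ) 1) (j : Fin V)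
    (hr : ∀ A ∈ uniformCell V j, |A - a| ≤ r) : f a - M * r ≤ cellAverage V w f j := by
  refine le_cellAverage hη hw hwi (continuousOn_of_abs_sub_le hf) j fun A hA => ?_
  have hlip := (abs_le.1 (hf a ha A (uniformCell_subset_unitInterval j hA))).2
  have hr' := mul_le_mul_of_nonneg_left (abs_sub_comm a A ▸ hr A hA) hM
  linarith

include hη hw hwi hM hf in
lemma cellAverage_le_midpoint_add (j : Fin V) :
    cellAverage V w f j ≤ f (uniformCellMidpoint V j) + M / (2 * V) := by
  refine cellAverage_le hη hw hwi (continuousOn_of_abs_sub_le hf) j fun A hA => ?_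
  have hsub := uniformCell_subset_unitInterval j
  have hlip := (abs_le.1 (hf A (hsub hA) _ (hsub (uniformCellMidpoint_mem j)))).2
  have hmid := mul_le_mul_of_nonneg_left (abs_sub_uniformCellMidpoint_le hA) hM
  rw [mul_one_div] at hmid
  linarith

end Lipschitz

end CellAverage

section Softmax

open Finset

variable {ι : Type*} [Fintype ι] {H : ℝ} {u : ι → ℝ}

noncomputable def softmax (H : ℝ) (u : ι → ℝ) (j : ι) : ℝ :=
  Real.exp (u j / H) / ∑ k, Real.exp (u k / H)

lemma softmax_nonneg (j : ι) : 0 ≤ softmax H u j :=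
  div_nonneg (Real.exp_pos _).le (sum_nonneg fun _ _ => (Real.exp_pos _).le)

lemma sum_softmax [Nonempty ι] : ∑ j, softmax H u j = 1 := by
  simp only [softmax, ← sum_div]
  exact div_self (sum_pos (fun k _ => Real.exp_pos _) univ_nonempty).ne'

lemma softmax_le_exp_sub (j k : ι) : softmax H u j ≤ Real.exp ((u j - u k) / H) := by
  rw [softmax, sub_div, Real.exp_sub]
  exact div_le_div_of_nonneg_left (Real.exp_pos _).le (Real.exp_pos _)
    (single_le_sum (fun l _ => (Real.exp_pos (u l / H)).le) (mem_univ k))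

lemma sub_sum_mul_softmax [Nonempty ι] (r : ℝ) (m : ι → ℝ) :
    r - ∑ j, m j * softmax H u j = ∑ j, (r - m j) * softmax H u j := by
  simp only [sub_mul, sum_sub_distrib, ← mul_sum, sum_softmax, mul_one]

lemma sum_mul_softmax_le {g : ι → ℝ} {K : ℝ} [Nonempty ι] (hg : ∀ j, g j ≤ K) :
    ∑ j, g j * softmax H u j ≤ K :=
  calc ∑ j, g j * softmax H u j ≤ ∑ j, K * softmax H u j :=
        sum_le_sum fun j _ => mul_le_mul_of_nonneg_right (hg j) (softmax_nonneg j)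
    _ = K := by rw [← mul_sum, sum_softmax, mul_one]

lemma sum_sub_mul_softmax_le [DecidableEq ι] {r δ Δ K ε : ℝ} {m : ι → ℝ} (hH : 0 < H)
    (hu : ∀ j, |u j - m j| ≤ ε) (hgap : ∀ j, r - m j ∈ Icc 0 K)
    (hsplit : ∀ j, r - m j ≤ δ ∨ m j ≤ r - Δ) (j₀ : ι) (hj₀ : r - m j₀ ≤ δ) :
    ∑ j, (r - m j) * softmax H u j ≤
      δ + (Fintype.card ι - 1) * K * Real.exp ((δ - Δ + 2 * ε) / H) := by
  have : Nonempty ι := ⟨j₀⟩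
  set E := Real.exp ((δ - Δ + 2 * ε) / H)
  have hδ : 0 ≤ δ := (hgap j₀).1.trans hj₀
  have hK : 0 ≤ K := (hgap j₀).1.trans (hgap j₀).2
  have hKE : 0 ≤ K * E := mul_nonneg hK (Real.exp_pos _).le
  have hfar : ∀ j, m j ≤ r - Δ → softmax H u j ≤ E := fun j hj =>
    (softmax_le_exp_sub j j₀).trans <| Real.exp_le_exp.2 <| div_le_div_of_nonneg_right
      (by linarith [(abs_le.1 (hu j)).2, (abs_le.1 (hu j₀)).1]) hH.le
  have hterm : ∀ j, (r - m j) * softmax H u j ≤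
      δ * softmax H u j + (K * E - if j = j₀ then K * E else 0) := by
    intro j
    have hπ := softmax_nonneg (H := H) (u := u) j
    by_cases hj : j = j₀
    · subst hj
      simpa using mul_le_mul_of_nonneg_right hj₀ hπ
    rw [if_neg hj, sub_zero]
    rcases hsplit j with hnear | hfar'
    · nlinarith [mul_le_mul_of_nonneg_right hnear hπ]
    · nlinarith [mul_le_mul (hgap j).2 (hfar j hfar') hπ hK]
  calc ∑ j, (r - m j) * softmax H u j
      ≤ ∑ j, (δ * softmax H u j + (K * E - if j = j₀ then K * E else 0)) :=
        sum_le_sum fun j _ => hterm j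
    _ = δ + (Fintype.card ι - 1) * K * E := by
        rw [sum_add_distrib, ← mul_sum, sum_softmax, sum_sub_distrib, sum_ite_eq',
          if_pos (Finset.mem_univ _), sum_const, card_univ, nsmul_eq_mul]
        ring

end Softmax

section Regret

variable {V : ℕ} {η M γ t ε H a : ℝ} {f w : ℝ → ℝ}

lemma sub_cellAverage_mem_Icc (hη : 0 < η) (hw : ∀ A ∈ Icc (0 : ℝ) 1, η ≤ w A)
    (hwi : IntegrableOn w (Icc 0 1)) (hfb : ∀ A ∈ Icc (0 : ℝ) 1, |f A| ≤ M)
    (hf : ContinuousOn f (Icc 0 1)) (hmax : ∀ A ∈ Icc (0 : ℝ) 1, f A ≤ f a)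
    (ha : a ∈ Icc (0 : ℝ) 1) (j : Fin V) : f a - cellAverage V w f j ∈ Icc 0 (2 * M) := by
  have hsub := uniformCell_subset_unitInterval j
  have hle := cellAverage_le hη hw hwi hf j fun A hA => hmax A (hsub hA)
  have hge := le_cellAverage hη hw hwi hf j fun A hA => (abs_le.1 (hfb A (hsub hA))).1
  constructor <;> linarith [(abs_le.1 (hfb a ha)).2]

lemma sum_sub_cellAverage_mul_softmax_le [NeZero V] {u : Fin V → ℝ} (hη : 0 < η)
    (hw : ∀ A ∈ Icc (0 : ℝ) 1, η ≤ w A) (hwi : IntegrableOn w (Icc 0 1)) (hM : 0 < M)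
    (hfb : ∀ A ∈ Icc (0 : ℝ) 1, |f A| ≤ M)
    (hf : ∀ A ∈ Icc (0 : ℝ) 1, ∀ A' ∈ Icc (0 : ℝ) 1, |f A - f A'| ≤ M * |A - A'|)
    (ha : a ∈ Icc (0 : ℝ) 1) (hmax : ∀ A ∈ Icc (0 : ℝ) 1, f A ≤ f a)
    (hmargin : ∀ A ∈ Icc (0 : ℝ) 1, γ ≤ |A - a| → M * t < f a - f A)
    (hγV : γ < 1 / (2 * V)) (hH : 0 < H) (hu : ∀ j, |u j - cellAverage V w f j| ≤ ε) :
    ∑ j, (f a - cellAverage V w f j) * softmax H u j ≤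
      M / V + M * V ^ 2 * Real.exp (-(M * t - 3 * M / V - 2 * ε) / H) := by
  have hV : (1 : ℝ) ≤ V := by exact_mod_cast Nat.one_le_iff_ne_zero.2 (NeZero.ne V)
  have hMV : 0 ≤ M / V := by positivity
  have hhalf : M / (2 * V) ≤ M / V := div_le_div_of_nonneg_left hM.le (by positivity) (by linarith)
  have hnear : ∀ j, (∀ A ∈ uniformCell V j, |A - a| ≤ 1 / V) →
      f a - cellAverage V w f j ≤ M / V := fun j hj => by
    have := sub_mul_le_cellAverage hη hw hwi hM.le hf ha j hj
    rw [mul_one_div] at this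
    linarith
  have hsplit : ∀ j, f a - cellAverage V w f j ≤ M / V ∨
      cellAverage V w f j ≤ f a - (M * t - M / (2 * V)) := by
    intro j
    by_cases hmid : γ ≤ |uniformCellMidpoint V j - a|
    · have := hmargin _ (uniformCell_subset_unitInterval j (uniformCellMidpoint_mem j)) hmid
      have := cellAverage_le_midpoint_add hη hw hwi hM.le hf j
      right; linarith
    · refine .inl (hnear j fun A hA => ?_)
      calc |A - a| ≤ |A - uniformCellMidpoint V j| + |uniformCellMidpoint V j - a| :=
            abs_sub_le _ _ _
        _ ≤ 1 / (2 * V) + γ := add_le_add (abs_sub_uniformCellMidpoint_le hA) (not_le.1 hmid).le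
        _ ≤ 1 / V := by linarith [show 1 / (2 * (V : ℝ)) = 1 / V / 2 by ring]
  obtain ⟨j₀, hj₀⟩ := exists_mem_uniformCell (V := V) ha
  have hexp : Real.exp ((M / V - (M * t - M / (2 * V)) + 2 * ε) / H) ≤
      Real.exp (-(M * t - 3 * M / V - 2 * ε) / H) :=
    Real.exp_le_exp.2 (div_le_div_of_nonneg_right (by rw [mul_div_assoc]; linarith) hH.le)
  refine (sum_sub_mul_softmax_le hH hu
    (fun j => sub_cellAverage_mem_Icc hη hw hwi hfb (continuousOn_of_abs_sub_le hf) hmax ha j)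
    hsplit j₀ (hnear j₀ fun A hA => abs_sub_le_of_mem_uniformCell hA hj₀)).trans ?_
  rw [Fintype.card_fin]
  have hcoef : (V - 1) * (2 * M) ≤ M * V ^ 2 := by nlinarith [sq_nonneg ((V : ℝ) - 1)]
  have := mul_le_mul_of_nonneg_left hexp (by nlinarith : (0 : ℝ) ≤ (V - 1) * (2 * M))
  linarith [mul_le_mul_of_nonneg_right hcoef (Real.exp_pos (-(M * t - 3 * M / V - 2 * ε) / H)).le]

end Regret

lemma integral_le_mul_measureReal_add {α : Type*} [MeasurableSpace α] {P : Measure α}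
    [IsProbabilityMeasure P] {f : α → ℝ} {B : Set α} {C D : ℝ} (hf : ∀ x, 0 ≤ f x)
    (hC : ∀ x, f x ≤ C) (hD : ∀ x ∉ B, f x ≤ D) (hD0 : 0 ≤ D) :
    ∫ x, f x ∂P ≤ C * P.real B + D := by
  set B' := toMeasurable P B
  have hB' : MeasurableSet B' := measurableSet_toMeasurable P B
  have hint : Integrable (B'.indicator fun _ => C) P := (integrable_const C).indicator hB'
  calc ∫ x, f x ∂P ≤ ∫ x, (B'.indicator (fun _ => C) x + D) ∂P := by
        refine integral_mono_of_nonneg (ae_of_all _ hf) (hint.add (integrable_const D))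
          (ae_of_all _ fun x => ?_)
        dsimp only
        by_cases hx : x ∈ B'
        · rw [indicator_of_mem hx]
          linarith [hC x]
        · rw [indicator_of_notMem hx, zero_add]
          exact hD x fun h => hx (subset_toMeasurable P B h)
    _ = C * P.real B + D := by
        rw [integral_add hint (integrable_const D), integral_indicator_const _ hB', integral_const,
          measureReal_def, measure_toMeasurable, ← measureReal_def]
        simp [mul_comm]

theorem stmt_17_general
    {𝒳 : Type*} [MeasurableSpace 𝒳]
    (P : Measure 𝒳) [IsProbabilityMeasure P]
    (M c q H ε t γ η : ℝ)
    (hM : 0 < M) (hc : 0 < c) (hH : 0 < H)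
    (ht : t ∈ Set.Ioo (0:ℝ) 1) (hγ : γ ∈ Set.Ioo (0:ℝ) 1) (hη : 0 < η)
    (V : ℕ) (hV : 1 ≤ V) (hVγ : (V : ℝ) < 1 / (2 * γ))
    (μ : 𝒳 → ℝ → ℝ)
    (hμbdd : ∀ x, ∀ A ∈ Set.Icc (0:ℝ) 1, |μ x A| ≤ M)
    (hμlip : ∀ x, ∀ A ∈ Set.Icc (0:ℝ) 1, ∀ A' ∈ Set.Icc (0:ℝ) 1,
      |μ x A - μ x A'| ≤ M * |A - A'|)
    (Astar : 𝒳 → ℝ)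
    (hAmem : ∀ x, Astar x ∈ Set.Icc (0:ℝ) 1)
    (hAmax : ∀ x, ∀ A ∈ Set.Icc (0:ℝ) 1, μ x A ≤ μ x (Astar x))
    (e : 𝒳 → ℝ → ℝ)
    (he : ∀ x, ∀ A ∈ Set.Icc (0:ℝ) 1, η ≤ e x A)
    (heint : ∀ x, IntegrableOn (e x) (Set.Icc (0:ℝ) 1))
    (μI : Fin V → 𝒳 → ℝ)
    (hμI : ∀ j x, μI j x =
      (∫ A in Set.Icc (((j : ℕ) : ℝ) / V) ((((j : ℕ) : ℝ) + 1) / V), μ x A * e x A) /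
      (∫ A in Set.Icc (((j : ℕ) : ℝ) / V) ((((j : ℕ) : ℝ) + 1) / V), e x A))
    (hnoise : P {x | ∃ A ∈ Set.Icc (0:ℝ) 1,
        γ ≤ |A - Astar x| ∧ μ x (Astar x) - μ x A ≤ M * t} ≤
      ENNReal.ofReal (c * t ^ q * (1 - γ)))
    (μIt : Fin V → 𝒳 → ℝ)
    (hμIt : ∀ j x, |μIt j x - μI j x| ≤ ε)
    (πt : 𝒳 → Fin V → ℝ)
    (hπt : ∀ x j, πt x j = Real.exp (μIt j x / H) / ∑ k, Real.exp (μIt k x / H)) :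
    (∫ x, (μ x (Astar x) - ∑ j, μI j x * πt x j) ∂P) ≤
      M / V + 2 * c * M * t ^ q * (1 - γ) +
        M * V ^ 2 * Real.exp (-(M * t - 3 * M / V - 2 * ε) / H) := by
  have : NeZero V := ⟨by omega⟩
  have hγV : γ < 1 / (2 * V) := by
    rw [lt_div_iff₀ (by linarith [hγ.1])] at hVγ
    rw [lt_div_iff₀ (by positivity)]
    linarith
  have hμI' : ∀ j x, μI j x = cellAverage V (e x) (μ x) j := hμI
  have hgap := fun x => sub_cellAverage_mem_Icc (V := V) hη (he x) (heint x) (hμbdd x)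
    (continuousOn_of_abs_sub_le (hμlip x)) (hAmax x) (hAmem x)
  have hregret : ∀ x, μ x (Astar x) - ∑ j, μI j x * πt x j = ∑ j,
      (μ x (Astar x) - cellAverage V (e x) (μ x) j) * softmax H (μIt · x) j := fun x => by
    simp only [hμI', show πt x = softmax H (μIt · x) from funext (hπt x), sub_sum_mul_softmax]
  set B := {x | ∃ A ∈ Set.Icc (0:ℝ) 1, γ ≤ |A - Astar x| ∧ μ x (Astar x) - μ x A ≤ M * t}
  have hbad := ENNReal.toReal_le_of_le_ofReal
    (mul_nonneg (mul_nonneg hc.le (Real.rpow_nonneg ht.1.le q)) (by linarith [hγ.2])) hnoise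
  have hgood : ∀ x ∉ B, ∑ j, (μ x (Astar x) - cellAverage V (e x) (μ x) j) *
      softmax H (μIt · x) j ≤ M / V + M * V ^ 2 * Real.exp (-(M * t - 3 * M / V - 2 * ε) / H) :=
    fun x hx => sum_sub_cellAverage_mul_softmax_le hη (he x) (heint x) hM (hμbdd x) (hμlip x)
      (hAmem x) (hAmax x) (fun A hA hγA => lt_of_not_ge fun h => hx ⟨A, hA, hγA, h⟩) hγV hH
      fun j => hμI' j x ▸ hμIt j x
  calc ∫ x, (μ x (Astar x) - ∑ j, μI j x * πt x j) ∂P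
      = ∫ x, ∑ j, (μ x (Astar x) - cellAverage V (e x) (μ x) j) * softmax H (μIt · x) j ∂P := by
        simp_rw [hregret]
    _ ≤ 2 * M * P.real B + (M / V + M * V ^ 2 * Real.exp (-(M * t - 3 * M / V - 2 * ε) / H)) :=
        integral_le_mul_measureReal_add
          (fun x => Finset.sum_nonneg fun j _ => mul_nonneg (hgap x j).1 (softmax_nonneg j))
          (fun x => sum_mul_softmax_le fun j => (hgap x j).2) hgood (by positivity)
    _ ≤ _ := by
        rw [measureReal_def]
        nlinarith

/-- The bias bound `(I₃)` in the proof of Theorem 3 (continuous actions): the action space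
`[0,1]` is partitioned into `V` sub-intervals `I_j` (indexed by `j : Fin V`, with
`I_j = [j/V, (j+1)/V]`), `μ_{I_j}(x)` is the `e`-weighted average of `μ(x,·)` over `I_j`, and
`π̃` is the temperature-`H` softmax policy built from `ε`-accurate estimates `μ̃_{I_j}` of
`μ_{I_j}`. Under the continuous noise condition, the discretized regret of `π̃` against the
deterministic optimal policy `A*` is at most
`M/V + 2cM t^q (1−γ) + M V² exp(−(Mt − 3M/V − 2ε)/H)`. -/
theorem stmt_17
    {𝒳 : Type*} [MeasurableSpace 𝒳]
    (P : Measure 𝒳) [IsProbabilityMeasure P]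
    (M c q H ε t γ η : ℝ)
    (hM : 0 < M) (hc : 0 < c) (hq : 1 ≤ q) (hH : 0 < H) (hε : 0 ≤ ε)
    (ht : t ∈ Set.Ioo (0:ℝ) 1) (hγ : γ ∈ Set.Ioo (0:ℝ) 1) (hη : 0 < η)
    (V : ℕ) (hV : 1 ≤ V) (hVγ : (V : ℝ) < 1 / (2 * γ))
    (μ : 𝒳 → ℝ → ℝ)
    (hμmeas : Measurable (fun p : 𝒳 × ℝ => μ p.1 p.2))
    (hμbdd : ∀ x, ∀ A ∈ Set.Icc (0:ℝ) 1, |μ x A| ≤ M)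
    (hμlip : ∀ x, ∀ A ∈ Set.Icc (0:ℝ) 1, ∀ A' ∈ Set.Icc (0:ℝ) 1,
      |μ x A - μ x A'| ≤ M * |A - A'|)
    (Astar : 𝒳 → ℝ) (hAmeas : Measurable Astar)
    (hAmem : ∀ x, Astar x ∈ Set.Icc (0:ℝ) 1)
    (hAmax : ∀ x, ∀ A ∈ Set.Icc (0:ℝ) 1, μ x A ≤ μ x (Astar x))
    (e : 𝒳 → ℝ → ℝ)
    (hemeas : Measurable (fun p : 𝒳 × ℝ => e p.1 p.2))
    (he : ∀ x, ∀ A ∈ Set.Icc (0:ℝ) 1, η ≤ e x A)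
    (heint : ∀ x, IntegrableOn (e x) (Set.Icc (0:ℝ) 1))
    (μI : Fin V → 𝒳 → ℝ)
    (hμI : ∀ j x, μI j x =
      (∫ A in Set.Icc (((j : ℕ) : ℝ) / V) ((((j : ℕ) : ℝ) + 1) / V), μ x A * e x A) /
      (∫ A in Set.Icc (((j : ℕ) : ℝ) / V) ((((j : ℕ) : ℝ) + 1) / V), e x A))
    (hnoise : P {x | ∃ A ∈ Set.Icc (0:ℝ) 1,
        γ ≤ |A - Astar x| ∧ μ x (Astar x) - μ x A ≤ M * t} ≤
      ENNReal.ofReal (c * t ^ q * (1 - γ)))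
    (μIt : Fin V → 𝒳 → ℝ) (hμItmeas : ∀ j, Measurable (μIt j))
    (hμIt : ∀ j x, |μIt j x - μI j x| ≤ ε)
    (πt : 𝒳 → Fin V → ℝ)
    (hπt : ∀ x j, πt x j = Real.exp (μIt j x / H) / ∑ k, Real.exp (μIt k x / H)) :
    (∫ x, (μ x (Astar x) - ∑ j, μI j x * πt x j) ∂P) ≤
      M / V + 2 * c * M * t ^ q * (1 - γ) +
        M * V ^ 2 * Real.exp (-(M * t - 3 * M / V - 2 * ε) / H) :=
  stmt_17_general P M c q H ε t γ η hM hc hH ht hγ hη V hV hVγ μ hμbdd hμlip Astar hAmem hAmax e he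
    heint μI hμI hnoise μIt hμIt πt hπt
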